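/- arXiv:1707.03433 — 5 statements merged into one kernel-verified Lean document; each statement's English description precedes it below -/
import Mathlib

section
/- Let (X_n, f_n) be an inverse sequence of compact metric spaces with inverse limit X = lim(X_n, f_n), and let S be a compact metric space. If every X_n is homeomorphic to S and every bonding map f_{n+1} : X_{n+1} → X_n is a near-homeomorphism, then X is homeomorphic to S. -/
/-- The composite bonding map `f^{i+k}_i : X_{i+k} → X_i` of an inverse sequence
(the identity when `k = 0`). -/
def bond {X : ℕ → Type*} (f : ∀ n, X (n + 1) → X n) (i : ℕ) : ∀ k : ℕ, X (i + k) → X i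
  | 0 => id
  | k + 1 => fun x => bond f i k (f (i + k) x)

/-!
Choose homeomorphisms `Hₙ : Xₙ ≃ₜ X₀` inductively, `Hₙ₊₁` so close to `Hₙ ∘ fₙ` that the maps
`x ↦ Hₙ xₙ` on the inverse limit converge uniformly, with errors `cₙ` decreasing so fast that
`Hₙ⁻¹` still turns them into a tolerance `γₙ` at level `n`. The limit `G` is then continuous;
it is injective because threads that are `γₙ`-close at every level coincide; it is surjective
because it is a uniform limit of surjections, the bonding maps (and hence the projections of the
inverse limit) being surjective. So the inverse limit is homeomorphic to `X₀`, hence to `S`.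
-/

open Filter Function

def IsNearHomeomorph {X Y : Type*} [TopologicalSpace X] [PseudoMetricSpace Y] (f : X → Y) :
    Prop :=
  ∀ ε > (0 : ℝ), ∃ h : X ≃ₜ Y, ∀ x, dist (f x) (h x) < ε

theorem Continuous.surjective_of_approx {α Y : Type*} [TopologicalSpace α] [CompactSpace α]
    [MetricSpace Y] {g : α → Y} (hg : Continuous g)
    (happrox : ∀ ε > 0, ∃ F : α → Y, Surjective F ∧ ∀ x, dist (g x) (F x) < ε) :
    Surjective g := by
  intro y
  have hy : y ∈ closure (Set.range g) := by
    refine Metric.mem_closure_iff.mpr fun ε hε => ?_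
    obtain ⟨F, hF, hFg⟩ := happrox ε hε
    obtain ⟨x, rfl⟩ := hF y
    exact ⟨g x, Set.mem_range_self x, dist_comm (F x) (g x) ▸ hFg x⟩
  rwa [(isCompact_range hg).isClosed.closure_eq] at hy

namespace IsNearHomeomorph

variable {X Y : Type*} [TopologicalSpace X] {f : X → Y}

theorem surjective [CompactSpace X] [MetricSpace Y] (hf : IsNearHomeomorph f)
    (hcont : Continuous f) : Surjective f :=
  hcont.surjective_of_approx fun ε hε =>
    let ⟨h, hh⟩ := hf ε hε
    ⟨h, h.surjective, hh⟩

theorem homeomorph_comp {Z : Type*} [PseudoMetricSpace Y] [CompactSpace Y] [PseudoMetricSpace Z]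
    (hf : IsNearHomeomorph f) (H : Y ≃ₜ Z) : IsNearHomeomorph (H ∘ f) := by
  intro ε hε
  obtain ⟨δ, hδ, hH⟩ := Metric.uniformContinuous_iff.mp
    (CompactSpace.uniformContinuous_of_continuous H.continuous) ε hε
  obtain ⟨h, hh⟩ := hf δ hδ
  exact ⟨h.trans H, fun x => hH (hh x)⟩

end IsNearHomeomorph

theorem UniformContinuous.exists_pos_le_forall_dist_le {Z W : Type*} [PseudoMetricSpace Z]
    [PseudoMetricSpace W] {g : Z → W} (hg : UniformContinuous g) {γ M : ℝ} (hγ : 0 < γ)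
    (hM : 0 < M) : ∃ c, 0 < c ∧ c ≤ M ∧ ∀ a b, dist a b ≤ c → dist (g a) (g b) < γ := by
  obtain ⟨δ, hδ, hgδ⟩ := Metric.uniformContinuous_iff.mp hg γ hγ
  refine ⟨min M (δ / 2), lt_min hM (half_pos hδ), min_le_left _ _, fun a b hab => hgδ ?_⟩
  linarith [min_le_right M (δ / 2)]

theorem le_div_pow_of_le_half {c : ℕ → ℝ} (hc : ∀ n, c (n + 1) ≤ c n / 2) (n m : ℕ) :
    c (m + n) ≤ c n / 2 ^ m := by
  induction m with
  | zero => simp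
  | succ m ih =>
    rw [Nat.succ_add, pow_succ, ← div_div]
    exact (hc _).trans (by linarith)

theorem exists_dist_le_two_mul_of_dist_succ_le {Y : Type*} [PseudoMetricSpace Y] [CompleteSpace Y]
    {u : ℕ → Y} {c : ℕ → ℝ} (hc : ∀ n, c (n + 1) ≤ c n / 2)
    (hu : ∀ n, dist (u n) (u (n + 1)) ≤ c n) : ∃ a, ∀ n, dist (u n) a ≤ 2 * c n := by
  have hgeom : ∀ n m, dist (u (m + n)) (u (m + 1 + n)) ≤ 2 * c n / 2 / 2 ^ m := fun n m => by
    rw [Nat.succ_add]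
    exact (hu _).trans ((le_div_pow_of_le_half hc n m).trans_eq (by ring))
  obtain ⟨a, ha⟩ := cauchySeq_tendsto_of_complete (cauchySeq_of_le_geometric_two (hgeom 0))
  refine ⟨a, fun n => ?_⟩
  simpa using dist_le_of_le_geometric_two_of_tendsto₀ (f := fun m => u (m + n)) (hgeom n)
    ((tendsto_add_atTop_iff_nat n).mpr ha)

theorem exists_tendstoUniformly_of_dist_succ_le {α Y : Type*} [PseudoMetricSpace Y]
    [CompleteSpace Y] {F : ℕ → α → Y} {c : ℕ → ℝ} (hc : ∀ n, c (n + 1) ≤ c n / 2)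
    (hFc : ∀ n x, dist (F n x) (F (n + 1) x) ≤ c n) :
    ∃ G : α → Y, TendstoUniformly F G atTop ∧ ∀ n x, dist (F n x) (G x) ≤ 2 * c n := by
  choose G hG using fun x => exists_dist_le_two_mul_of_dist_succ_le hc (hFc · x)
  refine ⟨G, Metric.tendstoUniformly_iff.mpr fun ε hε => ?_, fun n x => hG x n⟩
  have hc_lim := (summable_geometric_two' (4 * c 0)).tendsto_atTop_zero
  filter_upwards [hc_lim.eventually (gt_mem_nhds hε)] with n hn x
  calc dist (G x) (F n x) ≤ 2 * c n := dist_comm (G x) _ ▸ hG x n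
    _ ≤ 2 * (c 0 / 2 ^ n) := by gcongr; exact le_div_pow_of_le_half hc 0 n
    _ = 4 * c 0 / 2 / 2 ^ n := by ring
    _ < ε := hn

theorem exists_seq_of_exists_succ {α : ℕ → Type*} (P : ∀ n, α n → Prop)
    (R : ∀ n, α n → α (n + 1) → Prop) (h0 : ∃ a, P 0 a)
    (hsucc : ∀ n a, P n a → ∃ b, P (n + 1) b ∧ R n a b) :
    ∃ s : ∀ n, α n, ∀ n, P n (s n) ∧ R n (s n) (s (n + 1)) := by
  obtain ⟨a₀, ha₀⟩ := h0
  choose next hnextP hnextR using hsucc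
  let s : ∀ n, {a // P n a} := fun n =>
    Nat.rec ⟨a₀, ha₀⟩ (fun n a => ⟨next n a a.2, hnextP n a a.2⟩) n
  exact ⟨fun n => (s n).1, fun n => ⟨(s n).2, hnextR n (s n).1 (s n).2⟩⟩

abbrev InvLimit {X : ℕ → Type*} (f : ∀ n, X (n + 1) → X n) : Type _ :=
  {x : ∀ n, X n // ∀ n, f n (x (n + 1)) = x n}

namespace InvLimit

theorem compactSpace {X : ℕ → Type*} [∀ n, TopologicalSpace (X n)] [∀ n, CompactSpace (X n)]
    [∀ n, T2Space (X n)] {f : ∀ n, X (n + 1) → X n} (hf : ∀ n, Continuous (f n)) :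
    CompactSpace (InvLimit f) := by
  refine isCompact_iff_compactSpace.mp (IsClosed.isCompact ?_)
  show IsClosed {x : ∀ n, X n | ∀ n, f n (x (n + 1)) = x n}
  rw [Set.ofPred_forall]
  exact isClosed_iInter fun n =>
    isClosed_eq ((hf n).comp (continuous_apply (n + 1))) (continuous_apply n)

theorem surjective_proj {X : ℕ → Type*} {f : ∀ n, X (n + 1) → X n}
    (hf : ∀ n, Surjective (f n)) (n : ℕ) : Surjective fun x : InvLimit f => x.1 n := by
  induction n generalizing X with
  | zero =>
    intro s
    choose g hg using hf
    let x : ∀ n, X n := fun n => Nat.rec s (fun m xm => g m xm) n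
    exact ⟨⟨x, fun m => hg m (x m)⟩, rfl⟩
  | succ n ih =>
    intro s
    obtain ⟨⟨x, hx⟩, rfl⟩ := ih (X := fun m => X (m + 1)) (f := fun m => f (m + 1))
      (fun m => hf (m + 1)) s
    refine ⟨⟨fun | 0 => f 0 (x 0) | m + 1 => x m, ?_⟩, rfl⟩
    rintro (_ | m)
    · rfl
    · exact hx m

variable {X : ℕ → Type*} [∀ n, MetricSpace (X n)] [∀ n, CompactSpace (X n)]
  {f : ∀ n, X (n + 1) → X n}

theorem exists_pos_forall_dist_lt (hf : ∀ n, Continuous (f n)) (n : ℕ) {ε : ℝ} (hε : 0 < ε) :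
    ∃ γ > 0, ∀ x y : InvLimit f, dist (x.1 n) (y.1 n) < γ → ∀ k ≤ n, dist (x.1 k) (y.1 k) < ε := by
  induction n with
  | zero => exact ⟨ε, hε, fun x y hxy k hk => by rwa [Nat.le_zero.mp hk]⟩
  | succ n ih =>
    obtain ⟨γ, hγ, hγ_spec⟩ := ih
    obtain ⟨δ, hδ, hfδ⟩ := Metric.uniformContinuous_iff.mp
      (CompactSpace.uniformContinuous_of_continuous (hf n)) γ hγ
    refine ⟨min δ ε, lt_min hδ hε, fun x y hxy k hk => ?_⟩
    rcases Nat.of_le_succ hk with hk | rfl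
    · refine hγ_spec x y ?_ k hk
      rw [← x.2 n, ← y.2 n]
      exact hfδ (hxy.trans_le (min_le_left _ _))
    · exact hxy.trans_le (min_le_right _ _)

theorem exists_pos_eq_of_forall_dist_lt (hf : ∀ n, Continuous (f n)) :
    ∃ γ : ℕ → ℝ, (∀ n, 0 < γ n) ∧
      ∀ x y : InvLimit f, (∀ n, dist (x.1 n) (y.1 n) < γ n) → x = y := by
  choose γ hγ hγ_spec using fun n => exists_pos_forall_dist_lt hf n (Nat.one_div_pos_of_nat (n := n))
  refine ⟨γ, hγ, fun x y hxy => Subtype.ext (funext fun k => eq_of_forall_dist_le fun ε hε => ?_)⟩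
  obtain ⟨N, hN⟩ := exists_nat_one_div_lt hε
  have hclose := hγ_spec (max N k) x y (hxy _) k (le_max_right _ _)
  have hmono : 1 / ((max N k : ℕ) + 1 : ℝ) ≤ 1 / (N + 1) := by
    gcongr
    exact_mod_cast le_max_left N k
  linarith

end InvLimit

/- With step errors `c n / 4`, the uniform limit of `x ↦ H n (x n)` stays within `c n / 2` of it,
so two threads with the same limit are `c n`-close after `H n`. -/
theorem exists_homeomorph_approx {X : ℕ → Type*} [∀ n, MetricSpace (X n)]
    [∀ n, CompactSpace (X n)] {f : ∀ n, X (n + 1) → X n} (hnear : ∀ n, IsNearHomeomorph (f n))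
    {γ : ℕ → ℝ} (hγ : ∀ n, 0 < γ n) :
    ∃ (H : ∀ n, X n ≃ₜ X 0) (c : ℕ → ℝ), ∀ n,
      (0 < c n ∧ ∀ a b, dist a b ≤ c n → dist ((H n).symm a) ((H n).symm b) < γ n) ∧
      c (n + 1) ≤ c n / 2 ∧ ∀ s, dist (H (n + 1) s) (H n (f n s)) < c n / 4 := by
  have hmodulus : ∀ n (H : X n ≃ₜ X 0) {M : ℝ}, 0 < M → ∃ c,
      (0 < c ∧ ∀ a b, dist a b ≤ c → dist (H.symm a) (H.symm b) < γ n) ∧ c ≤ M := by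
    intro n H M hM
    obtain ⟨c, hc, hcM, hcH⟩ := (CompactSpace.uniformContinuous_of_continuous
      H.symm.continuous).exists_pos_le_forall_dist_le (hγ n) hM
    exact ⟨c, ⟨hc, hcH⟩, hcM⟩
  obtain ⟨c₀, hc₀, -⟩ := hmodulus 0 (Homeomorph.refl (X 0)) one_pos
  obtain ⟨s, hs⟩ := exists_seq_of_exists_succ (α := fun n => (X n ≃ₜ X 0) × ℝ)
    (fun n p => 0 < p.2 ∧ ∀ a b, dist a b ≤ p.2 → dist (p.1.symm a) (p.1.symm b) < γ n)
    (fun n p q => q.2 ≤ p.2 / 2 ∧ ∀ s, dist (q.1 s) (p.1 (f n s)) < p.2 / 4)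
    ⟨(Homeomorph.refl (X 0), c₀), hc₀⟩ fun n p hp => by
      obtain ⟨H, hH⟩ := (hnear n).homeomorph_comp p.1 (p.2 / 4) (by linarith [hp.1])
      obtain ⟨c, hc, hcM⟩ := hmodulus (n + 1) H (half_pos hp.1)
      exact ⟨(H, c), hc, hcM, fun s => dist_comm (p.1 (f n s)) _ ▸ hH s⟩
  exact ⟨fun n => (s n).1, fun n => (s n).2, hs⟩

theorem InvLimit.nonempty_homeomorph_zero {X : ℕ → Type*} [∀ n, MetricSpace (X n)]
    [∀ n, CompactSpace (X n)] {f : ∀ n, X (n + 1) → X n} (hf : ∀ n, Continuous (f n))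
    (hnear : ∀ n, IsNearHomeomorph (f n)) : Nonempty (InvLimit f ≃ₜ X 0) := by
  have := InvLimit.compactSpace hf
  obtain ⟨γ, hγ, heq⟩ := InvLimit.exists_pos_eq_of_forall_dist_lt hf
  obtain ⟨H, c, hc⟩ := exists_homeomorph_approx hnear hγ
  let φ : ℕ → InvLimit f → X 0 := fun n x => H n (x.1 n)
  have hφ_succ : ∀ n x, dist (φ n x) (φ (n + 1) x) ≤ c n / 4 := fun n x => by
    rw [dist_comm]
    simpa only [φ, ← x.2 n] using ((hc n).2.2 _).le
  obtain ⟨G, hunif, hG⟩ := exists_tendstoUniformly_of_dist_succ_le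
    (fun n => by linarith [(hc n).2.1]) hφ_succ
  have hG_cont : Continuous G := hunif.continuous (Frequently.of_forall fun n =>
    (H n).continuous.comp ((continuous_apply n).comp continuous_subtype_val))
  have hG_inj : Injective G := fun x y hxy => heq x y fun n => by
    have hclose : dist (φ n x) (φ n y) ≤ c n := by
      linarith [dist_triangle_right (φ n x) (φ n y) (G x), hG n x, hxy ▸ hG n y]
    simpa [φ] using (hc n).1.2 _ _ hclose
  have hφ_surj : ∀ n, Surjective (φ n) := fun n => (H n).surjective.comp
    (InvLimit.surjective_proj (fun m => (hnear m).surjective (hf m)) n)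
  have hG_surj : Surjective G := hG_cont.surjective_of_approx fun ε hε =>
    let ⟨n, hn⟩ := (Metric.tendstoUniformly_iff.mp hunif ε hε).exists
    ⟨φ n, hφ_surj n, hn⟩
  exact ⟨hG_cont.homeoOfEquivCompactToT2 (f := Equiv.ofBijective G ⟨hG_inj, hG_surj⟩)⟩

theorem brown_inverse_limit_near_homeomorphism_general
    (X : ℕ → Type) [∀ n, MetricSpace (X n)] [∀ n, CompactSpace (X n)]
    (f : ∀ n, X (n + 1) → X n) (hf : ∀ n, Continuous (f n))
    (S : Type) [MetricSpace S]
    (hXS : ∀ n, Nonempty (X n ≃ₜ S))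
    (hnear : ∀ n, ∀ ε > (0 : ℝ), ∃ h : X (n + 1) ≃ₜ X n, ∀ x, dist (f n x) (h x) < ε) :
    Nonempty ({x : ∀ n, X n // ∀ n, f n (x (n + 1)) = x n} ≃ₜ S) := by
  obtain ⟨e⟩ := InvLimit.nonempty_homeomorph_zero hf hnear
  obtain ⟨e₀⟩ := hXS 0
  exact ⟨e.trans e₀⟩

/-- Brown's theorem: the inverse limit of an inverse sequence of compact metric spaces,
all homeomorphic to a fixed compact metric space `S`, with near-homeomorphisms as
bonding maps, is homeomorphic to `S`. -/
theorem brown_inverse_limit_near_homeomorphism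
    (X : ℕ → Type) [∀ n, MetricSpace (X n)] [∀ n, CompactSpace (X n)]
    (f : ∀ n, X (n + 1) → X n) (hf : ∀ n, Continuous (f n))
    (S : Type) [MetricSpace S] [CompactSpace S]
    (hXS : ∀ n, Nonempty (X n ≃ₜ S))
    (hnear : ∀ n, ∀ ε > (0 : ℝ), ∃ h : X (n + 1) ≃ₜ X n, ∀ x, dist (f n x) (h x) < ε) :
    Nonempty ({x : ∀ n, X n // ∀ n, f n (x (n + 1)) = x n} ≃ₜ S) :=
  brown_inverse_limit_near_homeomorphism_general X f hf S hXS hnear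
end

section
/- Let (X_n, f_n) be an inverse sequence of compact metric spaces and let A_n ⊆ X_n be compact subsets with f_{n+1}(A_{n+1}) ⊆ A_n for all n. Let X = lim(X_n, f_n) be the inverse limit and A = { x ∈ X : x_n ∈ A_n for all n }. Let S be a compact metric space and T ⊆ S a compact subset. If for every n there is a homeomorphism of pairs (X_n, A_n) → (S, T), and every bonding map f_{n+1} : (X_{n+1}, A_{n+1}) → (X_n, A_n) is a near-homeomorphism of pairs, then there is a homeomorphism φ : X → S with φ(A) = T. -/
/-!
Choose homeomorphisms of pairs `gₙ : (Xₙ, Aₙ) → (X₀, A₀)` inductively, `gₙ₊₁ = gₙ ∘ hₙ` with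
`hₙ` a homeomorphism of pairs so close to `fₙ` that `gₙ₊₁` is `δₙ/2`-close to `gₙ ∘ fₙ`, where
`δₙ₊₁ ≤ δₙ/2` is so small that two points of the inverse limit whose images under `gₙ ∘ πₙ` are
`2δₙ`-close have `2⁻ⁿ`-close coordinates up to `n`. Then `gₙ ∘ πₙ` converges uniformly to a
continuous `G`, which is injective by the choice of `δₙ`. The bonding maps are surjective on the
pairs, being uniform limits of such surjections, so `G` maps the inverse limit onto `X₀` and the
limit of the `Aₙ` onto `A₀`; by compactness `G` is a homeomorphism.
-/

open Set Filter Topology Metric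

theorem surjOn_of_forall_exists_dist_lt {α β : Type*} [TopologicalSpace α] [MetricSpace β]
    {f : α → β} {s : Set α} {t : Set β} (hs : IsCompact s) (hf : ContinuousOn f s)
    (happrox : ∀ ε > 0, ∃ g : α → β, SurjOn g s t ∧ ∀ x ∈ s, dist (f x) (g x) < ε) :
    SurjOn f s t := by
  intro y hy
  rw [← (hs.image_of_continuousOn hf).isClosed.closure_eq, Metric.mem_closure_iff]
  intro ε hε
  obtain ⟨g, hg, hfg⟩ := happrox ε hε
  obtain ⟨x, hx, rfl⟩ := hg hy
  exact ⟨f x, mem_image_of_mem f hx, dist_comm (f x) (g x) ▸ hfg x hx⟩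

theorem Function.FactorsThrough.exists_pos_dist_lt {K Y Z : Type*} [TopologicalSpace K]
    [CompactSpace K] [MetricSpace Y] [PseudoMetricSpace Z] {φ : K → Y} {ψ : K → Z}
    (hψφ : ψ.FactorsThrough φ) (hφ : Continuous φ) (hψ : Continuous ψ) {ε : ℝ} (hε : 0 < ε) :
    ∃ δ > 0, ∀ x y, dist (φ x) (φ y) < δ → dist (ψ x) (ψ y) < ε := by
  have hclosed : IsClosed {p : K × K | ε ≤ dist (ψ p.1) (ψ p.2)} :=
    isClosed_le continuous_const (by fun_prop)
  obtain ⟨δ, hδ, hle⟩ := hclosed.isCompact.exists_forall_le' (a := 0)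
    (f := fun p => dist (φ p.1) (φ p.2)) (by fun_prop) fun p hp =>
      dist_pos.2 fun h => hε.not_ge (by simpa [hψφ h] using hp)
  exact ⟨δ, hδ, fun x y hxy => not_le.1 fun h => (hle (x, y) h).not_gt hxy⟩

theorem le_geometric_of_le_half {δ : ℕ → ℝ} (hδ : ∀ n, δ (n + 1) ≤ δ n / 2) (n m : ℕ) :
    δ (n + m) ≤ δ n * (1 / 2) ^ m := by
  induction m with
  | zero => simp
  | succ m ih =>
    rw [← add_assoc, pow_succ]
    linarith [hδ (n + m)]

theorem tendsto_zero_of_le_half {δ : ℕ → ℝ} (hδ₀ : ∀ n, 0 ≤ δ n) (hδ : ∀ n, δ (n + 1) ≤ δ n / 2) :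
    Tendsto δ atTop (𝓝 0) := by
  refine squeeze_zero hδ₀ (fun n => by simpa using le_geometric_of_le_half hδ 0 n) ?_
  simpa using (tendsto_pow_atTop_nhds_zero_of_lt_one (by norm_num : (0 : ℝ) ≤ 1 / 2)
    (by norm_num)).const_mul (δ 0)

theorem exists_limit_of_dist_succ_le_half {α β : Type*} [PseudoMetricSpace β] [CompleteSpace β]
    {F : ℕ → α → β} {δ : ℕ → ℝ} (hδ : ∀ n, δ (n + 1) ≤ δ n / 2)
    (hF : ∀ n x, dist (F n x) (F (n + 1) x) ≤ δ n / 2) :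
    ∃ G : α → β, ∀ n x, dist (F n x) (G x) ≤ δ n := by
  have hstep (n m : ℕ) (x : α) :
      dist (F (n + m) x) (F (n + m + 1) x) ≤ δ n / 2 * (1 / 2) ^ m := by
    linarith [hF (n + m) x, le_geometric_of_le_half hδ n m]
  have hlim (x : α) : ∃ y, Tendsto (F · x) atTop (𝓝 y) :=
    cauchySeq_tendsto_of_complete <|
      cauchySeq_of_le_geometric (1 / 2) (δ 0 / 2) (by norm_num) fun m => by
        simpa only [zero_add] using hstep 0 m x
  choose G hG using hlim
  refine ⟨G, fun n x => ?_⟩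
  have htail : Tendsto (fun m => F (n + m) x) atTop (𝓝 (G x)) :=
    (hG x).comp (tendsto_atTop_atTop_of_monotone (fun _ _ h => by omega) fun m => ⟨m, by omega⟩)
  have := dist_le_of_le_geometric_of_tendsto₀ _ _ (by norm_num) (hstep n · x) htail
  rwa [add_zero, show δ n / 2 / (1 - 1 / 2) = δ n by ring] at this

theorem exists_compatible_seq_of_surjOn {Y : ℕ → Type*} {g : ∀ k, Y (k + 1) → Y k}
    {B : ∀ k, Set (Y k)} (hmaps : ∀ k, MapsTo (g k) (B (k + 1)) (B k))
    (hsurj : ∀ k, SurjOn (g k) (B (k + 1)) (B k)) {n : ℕ} {a : Y n} (ha : a ∈ B n) :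
    ∃ x : ∀ k, Y k, (∀ k, g k (x (k + 1)) = x k) ∧ (∀ k, x k ∈ B k) ∧ x n = a := by
  induction n generalizing Y with
  | zero =>
    choose s hsB hgs using hsurj
    let x : ∀ k, B k := fun k => Nat.rec ⟨a, ha⟩ (fun k y => ⟨s k y.2, hsB k y.2⟩) k
    exact ⟨fun k => (x k).1, fun k => hgs k (x k).2, fun k => (x k).2, rfl⟩
  | succ n ih =>
    -- Lift to the shifted sequence `Y (· + 1)`, then prepend its image in `Y 0`.
    obtain ⟨y, hyg, hyB, hyn⟩ := ih (fun k => hmaps (k + 1)) (fun k => hsurj (k + 1)) ha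
    refine ⟨fun k => Nat.rec (g 0 (y 0)) (fun k _ => y k) k, ?_, ?_, hyn⟩
    · rintro (_ | k)
      exacts [rfl, hyg k]
    · rintro (_ | k)
      exacts [hmaps 0 (hyB 0), hyB k]

theorem subset_closure_image_of_dist_le {α β : Type*} [PseudoMetricSpace β] {F : ℕ → α → β}
    {G : α → β} {δ : ℕ → ℝ} (hδ : Tendsto δ atTop (𝓝 0)) (hG : ∀ n x, dist (F n x) (G x) ≤ δ n)
    {s : Set α} {t : Set β} (hst : ∀ n, t ⊆ F n '' s) : t ⊆ closure (G '' s) := by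
  intro z hz
  rw [Metric.mem_closure_iff]
  intro ε hε
  obtain ⟨n, hn⟩ := (hδ.eventually (gt_mem_nhds hε)).exists
  obtain ⟨x, hx, rfl⟩ := hst n hz
  exact ⟨G x, mem_image_of_mem G hx, (hG n x).trans_lt hn⟩

section InverseLimit

variable {X : ℕ → Type*} {f : ∀ n, X (n + 1) → X n}

abbrev InvLim (f : ∀ n, X (n + 1) → X n) : Type _ :=
  {x : ∀ n, X n // ∀ n, f n (x (n + 1)) = x n}

namespace InvLim

theorem eq_of_le (x y : InvLim f) {n k : ℕ} (hxy : x.1 n = y.1 n) (hk : k ≤ n) :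
    x.1 k = y.1 k := by
  induction hk using Nat.decreasingInduction with
  | self => exact hxy
  | of_succ k _ ih => rw [← x.2 k, ← y.2 k, ih]

theorem subset_image_proj {B : ∀ n, Set (X n)} (hmaps : ∀ k, MapsTo (f k) (B (k + 1)) (B k))
    (hsurj : ∀ k, SurjOn (f k) (B (k + 1)) (B k)) (n : ℕ) :
    B n ⊆ (fun x : InvLim f => x.1 n) '' {x | ∀ k, x.1 k ∈ B k} := fun a ha => by
  obtain ⟨x, hx, hxB, rfl⟩ := exists_compatible_seq_of_surjOn hmaps hsurj ha
  exact ⟨⟨x, hx⟩, hxB, rfl⟩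

section Topology

variable [∀ n, TopologicalSpace (X n)]

theorem isClosed_setOf_forall_mem [∀ n, T2Space (X n)] {B : ∀ n, Set (X n)}
    (hB : ∀ n, IsClosed (B n)) : IsClosed {x : InvLim f | ∀ n, x.1 n ∈ B n} := by
  simp only [ofPred_forall]
  exact isClosed_iInter fun n => (hB n).preimage ((continuous_apply n).comp continuous_subtype_val)

theorem compactSpace [∀ n, T2Space (X n)] [∀ n, CompactSpace (X n)]
    (hf : ∀ n, Continuous (f n)) : CompactSpace (InvLim f) := by
  have : IsClosed {x : ∀ n, X n | ∀ n, f n (x (n + 1)) = x n} := by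
    simp only [ofPred_forall]
    exact isClosed_iInter fun n =>
      isClosed_eq ((hf n).comp (continuous_apply _)) (continuous_apply _)
  exact isCompact_iff_compactSpace.1 this.isCompact

end Topology

variable [∀ n, MetricSpace (X n)]

theorem image_eq_of_dist_le {Y : Type*} [MetricSpace Y] (hf : ∀ n, Continuous (f n))
    [∀ n, CompactSpace (X n)] {g : ∀ n, X n → Y} {G : InvLim f → Y} {δ : ℕ → ℝ}
    (hG : Continuous G) (hδ : Tendsto δ atTop (𝓝 0))
    (hgG : ∀ n x, dist (g n (x.1 n)) (G x) ≤ δ n) {B : ∀ n, Set (X n)} {C : Set Y}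
    (hB : ∀ n, IsClosed (B n)) (hC : IsClosed C) (hmaps : ∀ k, MapsTo (f k) (B (k + 1)) (B k))
    (hsurj : ∀ k, SurjOn (f k) (B (k + 1)) (B k)) (hgB : ∀ n, g n '' B n = C) :
    G '' {x | ∀ k, x.1 k ∈ B k} = C := by
  have : CompactSpace (InvLim f) := compactSpace hf
  refine Subset.antisymm ?_ ?_
  · rintro _ ⟨x, hx, rfl⟩
    have hlim : Tendsto (fun n => g n (x.1 n)) atTop (𝓝 (G x)) :=
      tendsto_iff_dist_tendsto_zero.2 <| squeeze_zero (fun _ => dist_nonneg) (hgG · x) hδ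
    exact hC.mem_of_tendsto hlim (Eventually.of_forall fun n => hgB n ▸ mem_image_of_mem _ (hx n))
  · have hclosed : IsClosed (G '' {x | ∀ k, x.1 k ∈ B k}) :=
      ((isClosed_setOf_forall_mem hB).isCompact.image hG).isClosed
    rw [← hclosed.closure_eq]
    refine subset_closure_image_of_dist_le hδ hgG fun n => ?_
    rw [← hgB n]
    rintro _ ⟨a, ha, rfl⟩
    obtain ⟨x, hx, rfl⟩ := subset_image_proj hmaps hsurj n ha
    exact ⟨x, hx, rfl⟩

theorem exists_pos_dist_proj_lt [∀ n, CompactSpace (X n)] (hf : ∀ n, Continuous (f n)) {n : ℕ}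
    {Y : Type*} [MetricSpace Y] {φ : X n → Y} (hφ : Continuous φ) (hφ_inj : Function.Injective φ)
    {ε : ℝ} (hε : 0 < ε) : ∃ δ > 0, ∀ x y : InvLim f,
      dist (φ (x.1 n)) (φ (y.1 n)) < δ → ∀ k ≤ n, dist (x.1 k) (y.1 k) < ε := by
  have : CompactSpace (InvLim f) := compactSpace hf
  obtain ⟨δ, hδ, hsep⟩ := Function.FactorsThrough.exists_pos_dist_lt
    (φ := fun x : InvLim f => φ (x.1 n)) (ψ := fun x : InvLim f => fun k : Fin (n + 1) => x.1 k)
    (fun x y hxy => funext fun k => eq_of_le x y (hφ_inj hxy) (Nat.lt_succ_iff.1 k.2))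
    (hφ.comp ((continuous_apply n).comp continuous_subtype_val))
    (continuous_pi fun k => (continuous_apply _).comp continuous_subtype_val) hε
  exact ⟨δ, hδ, fun x y hxy k hk =>
    (dist_pi_lt_iff hε).1 (hsep x y hxy) ⟨k, Nat.lt_succ_of_le hk⟩⟩

/-- The data `(gₙ, δₙ)` of the inductive construction. -/
structure Stage (A : ∀ n, Set (X n)) (f : ∀ n, X (n + 1) → X n) (n : ℕ) where
  g : X n ≃ₜ X 0
  image_eq : g '' A n = A 0
  δ : ℝ
  δ_pos : 0 < δ
  dist_lt : ∀ x y : InvLim f, dist (g (x.1 n)) (g (y.1 n)) ≤ 2 * δ →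
    ∀ k ≤ n, dist (x.1 k) (y.1 k) < (1 / 2) ^ n

theorem Stage.eq_of_forall_dist_le {A : ∀ n, Set (X n)} (σ : ∀ n, Stage A f n) {x y : InvLim f}
    (h : ∀ n, dist ((σ n).g (x.1 n)) ((σ n).g (y.1 n)) ≤ 2 * (σ n).δ) : x = y := by
  refine Subtype.ext (funext fun k => _root_.eq_of_forall_dist_le fun ε hε => ?_)
  obtain ⟨n, hn⟩ := exists_pow_lt_of_lt_one hε (by norm_num : (1 / 2 : ℝ) < 1)
  calc dist (x.1 k) (y.1 k) ≤ (1 / 2) ^ max n k :=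
        ((σ _).dist_lt x y (h _) k (le_max_right n k)).le
    _ ≤ (1 / 2) ^ n := pow_le_pow_of_le_one (by norm_num) (by norm_num) (le_max_left n k)
    _ ≤ ε := hn.le

variable [∀ n, CompactSpace (X n)] {A : ∀ n, Set (X n)}

theorem Stage.exists (hf : ∀ n, Continuous (f n)) {n : ℕ} (g : X n ≃ₜ X 0) (hg : g '' A n = A 0)
    {b : ℝ} (hb : 0 < b) : ∃ s : Stage A f n, s.g = g ∧ s.δ ≤ b := by
  obtain ⟨η, hη, hsep⟩ := exists_pos_dist_proj_lt hf g.continuous g.injective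
    (by positivity : (0 : ℝ) < (1 / 2) ^ n)
  refine ⟨⟨g, hg, min b (η / 3), by positivity, fun x y hxy => hsep x y ?_⟩, rfl, min_le_left _ _⟩
  linarith [min_le_right b (η / 3)]

theorem Stage.exists_succ (hf : ∀ n, Continuous (f n)) {n : ℕ}
    (hnear : ∀ ε > (0 : ℝ), ∃ h : X (n + 1) ≃ₜ X n,
      h '' A (n + 1) = A n ∧ ∀ x, dist (f n x) (h x) < ε) (s : Stage A f n) :
    ∃ t : Stage A f (n + 1), t.δ ≤ s.δ / 2 ∧ ∀ z, dist (s.g (f n z)) (t.g z) ≤ s.δ / 2 := by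
  obtain ⟨ε, hε, hs⟩ := Metric.uniformContinuous_iff.1
    (CompactSpace.uniformContinuous_of_continuous s.g.continuous) (s.δ / 2) (half_pos s.δ_pos)
  obtain ⟨h, hhA, hfh⟩ := hnear ε hε
  obtain ⟨t, htg, htδ⟩ := Stage.exists (A := A) hf (h.trans s.g)
    (by rw [← s.image_eq, ← hhA, image_image]; rfl) (half_pos s.δ_pos)
  exact ⟨t, htδ, fun z => by rw [htg]; exact (hs (hfh z)).le⟩

theorem exists_stages (hf : ∀ n, Continuous (f n))
    (hnear : ∀ n, ∀ ε > (0 : ℝ), ∃ h : X (n + 1) ≃ₜ X n,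
      h '' A (n + 1) = A n ∧ ∀ x, dist (f n x) (h x) < ε) :
    ∃ σ : ∀ n, Stage A f n, ∀ n, (σ (n + 1)).δ ≤ (σ n).δ / 2 ∧
      ∀ z, dist ((σ n).g (f n z)) ((σ (n + 1)).g z) ≤ (σ n).δ / 2 := by
  obtain ⟨σ₀, -⟩ := Stage.exists (A := A) hf (Homeomorph.refl (X 0)) (image_id _) one_pos
  choose next hnext using fun n (s : Stage A f n) => s.exists_succ hf (hnear n)
  exact ⟨fun n => Nat.rec σ₀ next n, fun n => hnext n _⟩

theorem exists_homeomorph_image_eq (hA : ∀ n, IsCompact (A n)) (hf : ∀ n, Continuous (f n))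
    (hfA : ∀ n, MapsTo (f n) (A (n + 1)) (A n))
    (hnear : ∀ n, ∀ ε > (0 : ℝ), ∃ h : X (n + 1) ≃ₜ X n,
      h '' A (n + 1) = A n ∧ ∀ x, dist (f n x) (h x) < ε) :
    ∃ φ : InvLim f ≃ₜ X 0, φ '' {x | ∀ n, x.1 n ∈ A n} = A 0 := by
  have : CompactSpace (InvLim f) := compactSpace hf
  obtain ⟨σ, hσ⟩ := exists_stages hf hnear
  obtain ⟨G, hG⟩ := exists_limit_of_dist_succ_le_half
    (F := fun n (x : InvLim f) => (σ n).g (x.1 n)) (fun n => (hσ n).1)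
    fun n x => by simpa only [x.2 n] using (hσ n).2 (x.1 (n + 1))
  have hδ := tendsto_zero_of_le_half (fun n => (σ n).δ_pos.le) fun n => (hσ n).1
  have hunif : TendstoUniformly (fun n (x : InvLim f) => (σ n).g (x.1 n)) G atTop :=
    Metric.tendstoUniformly_iff.2 fun ε hε => (hδ.eventually (gt_mem_nhds hε)).mono
      fun n hn x => (dist_comm (G x) _ ▸ hG n x).trans_lt hn
  have hGc : Continuous G := hunif.continuous <| .of_forall fun n =>
    (σ n).g.continuous.comp ((continuous_apply n).comp continuous_subtype_val)
  have hGinj : Function.Injective G := fun x y hxy => Stage.eq_of_forall_dist_le σ fun n => by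
    linarith [dist_triangle_right ((σ n).g (x.1 n)) ((σ n).g (y.1 n)) (G x), hG n x, hxy ▸ hG n y]
  have hsurjA (k : ℕ) : SurjOn (f k) (A (k + 1)) (A k) :=
    surjOn_of_forall_exists_dist_lt (hA _) (hf k).continuousOn fun ε hε =>
      let ⟨h, hh, hd⟩ := hnear k ε hε
      ⟨h, hh ▸ surjOn_image h _, fun x _ => hd x⟩
  have hsurj (k : ℕ) : SurjOn (f k) univ univ :=
    surjOn_of_forall_exists_dist_lt isCompact_univ (hf k).continuousOn fun ε hε =>
      let ⟨h, _, hd⟩ := hnear k ε hε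
      ⟨h, h.surjective.surjOn, fun x _ => hd x⟩
  have hGsurj : Function.Surjective G := range_eq_univ.1 <| by
    have := image_eq_of_dist_le hf hGc hδ hG (B := fun _ => univ) (fun _ => isClosed_univ)
      isClosed_univ (fun _ => mapsTo_univ _ _) hsurj
      fun n => image_univ_of_surjective (σ n).g.surjective
    simpa using this
  exact ⟨hGc.homeoOfEquivCompactToT2 (f := Equiv.ofBijective G ⟨hGinj, hGsurj⟩),
    image_eq_of_dist_le hf hGc hδ hG (fun n => (hA n).isClosed) (hA 0).isClosed hfA hsurjA
      fun n => (σ n).image_eq⟩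

end InvLim

end InverseLimit

theorem brown_inverse_limit_near_homeomorphism_pairs_general
    (X : ℕ → Type) [∀ n, MetricSpace (X n)] [∀ n, CompactSpace (X n)]
    (A : ∀ n, Set (X n)) (hA : ∀ n, IsCompact (A n))
    (f : ∀ n, X (n + 1) → X n) (hf : ∀ n, Continuous (f n))
    (hfA : ∀ n, Set.MapsTo (f n) (A (n + 1)) (A n))
    (S : Type) [MetricSpace S]
    (T : Set S)
    (hXS : ∀ n, ∃ h : X n ≃ₜ S, h '' A n = T)
    (hnear : ∀ n, ∀ ε > (0 : ℝ), ∃ h : X (n + 1) ≃ₜ X n,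
      h '' A (n + 1) = A n ∧ ∀ x, dist (f n x) (h x) < ε) :
    ∃ φ : {x : ∀ n, X n // ∀ n, f n (x (n + 1)) = x n} ≃ₜ S,
      φ '' {x : {x : ∀ n, X n // ∀ n, f n (x (n + 1)) = x n} | ∀ n, x.1 n ∈ A n} = T := by
  obtain ⟨φ, hφ⟩ := InvLim.exists_homeomorph_image_eq hA hf hfA hnear
  obtain ⟨h, hh⟩ := hXS 0
  exact ⟨φ.trans h, by rw [← hh, ← hφ, image_image]; rfl⟩

/-- Brown's theorem for pairs: the inverse limit of an inverse sequence of pairs of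
compact metric spaces, all pair-homeomorphic to a fixed pair `(S, T)`, with
near-homeomorphisms of pairs as bonding maps, is pair-homeomorphic to `(S, T)`. -/
theorem brown_inverse_limit_near_homeomorphism_pairs
    (X : ℕ → Type) [∀ n, MetricSpace (X n)] [∀ n, CompactSpace (X n)]
    (A : ∀ n, Set (X n)) (hA : ∀ n, IsCompact (A n))
    (f : ∀ n, X (n + 1) → X n) (hf : ∀ n, Continuous (f n))
    (hfA : ∀ n, Set.MapsTo (f n) (A (n + 1)) (A n))
    (S : Type) [MetricSpace S] [CompactSpace S]
    (T : Set S) (hT : IsCompact T)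
    (hXS : ∀ n, ∃ h : X n ≃ₜ S, h '' A n = T)
    (hnear : ∀ n, ∀ ε > (0 : ℝ), ∃ h : X (n + 1) ≃ₜ X n,
      h '' A (n + 1) = A n ∧ ∀ x, dist (f n x) (h x) < ε) :
    ∃ φ : {x : ∀ n, X n // ∀ n, f n (x (n + 1)) = x n} ≃ₜ S,
      φ '' {x : {x : ∀ n, X n // ∀ n, f n (x (n + 1)) = x n} | ∀ n, x.1 n ∈ A n} = T :=
  brown_inverse_limit_near_homeomorphism_pairs_general X A hA f hf hfA S T hXS hnear
end

section
/- Let X_i (i ∈ ℕ) be compact metric spaces equipped with two sequences of bonding maps f_{i+1}, g_{i+1} : X_{i+1} → X_i, and let A_i ⊆ X_i be compact subsets with f_{i+1}(A_{i+1}) ⊆ A_i and g_{i+1}(A_{i+1}) ⊆ A_i for all i. Let X = lim(X_i, f_i), Y = lim(X_i, g_i), A = { x ∈ X : x_i ∈ A_i for all i } and B = { y ∈ Y : y_i ∈ A_i for all i }. Suppose (a_i) is a Lebesgue sequence for (X_i, g_i) and that sup_{x ∈ X_{i+1}} dist(f_{i+1}(x), g_{i+1}(x)) < a_i for every i. Then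 for every N and x ∈ X the limit F_N(x) := lim_{n→∞} g^n_N(f^∞_n(x)) exists, the resulting map F : X → Y, F(x) = (F_0(x), F_1(x), …), is well defined and continuous, F(A) ⊆ B, and the restriction F|_A : A → B is surjective. -/
open Filter Topology

/-!
Each step of `k ↦ g^{N+k}_N (x_{N+k})` compares the `g`-images of `f w` and `g w` for a single
point `w`, so the Lebesgue condition bounds it by `b_{N+k}`; summability of `b` makes these
sequences uniformly Cauchy, which gives the limits `F_N`, their compatibility and continuity.
For surjectivity onto `y ∈ B`, the points `f^m_n (y_m)` are `f`-compatible below level `m`, and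
the same telescoping estimate keeps their `g`-images within a tail of `∑ b` from `y`.
A cluster point of these approximations in the compact product is an `f`-thread through the
`A_n` which `F` maps to `y`.
-/

section Bond

variable {X : ℕ → Type*} (f : ∀ n, X (n + 1) → X n)

theorem bond_succ_apply (x : ∀ n, X n) (i k : ℕ) :
    bond f i (k + 1) (x (i + (k + 1))) = f i (bond f (i + 1) k (x (i + 1 + k))) := by
  induction k generalizing x with
  | zero => rfl
  | succ k ih => exact ih fun n => f n (x (n + 1))

theorem bond_apply_of_compat {x : ∀ n, X n} (hx : ∀ n, f n (x (n + 1)) = x n) (i : ℕ) :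
    ∀ k, bond f i k (x (i + k)) = x i
  | 0 => rfl
  | k + 1 => by
    change bond f i k (f (i + k) (x (i + k + 1))) = x i
    rw [hx, bond_apply_of_compat hx i k]

theorem mapsTo_bond {A : ∀ n, Set (X n)} (hfA : ∀ n, Set.MapsTo (f n) (A (n + 1)) (A n))
    (i : ℕ) : ∀ k, Set.MapsTo (bond f i k) (A (i + k)) (A i)
  | 0 => Set.mapsTo_id _
  | k + 1 => (mapsTo_bond hfA i k).comp (hfA (i + k))

theorem continuous_bond [∀ n, TopologicalSpace (X n)] (hf : ∀ n, Continuous (f n)) (i : ℕ) :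
    ∀ k, Continuous (bond f i k)
  | 0 => continuous_id
  | k + 1 => (continuous_bond hf i k).comp (hf (i + k))

/-- The `m`-th approximate `f`-lift of `y`: `f^m_n (y_m)` for `n ≤ m` and `y_n` for `n ≥ m`. -/
def approxLift (y : ∀ n, X n) (m : ℕ) : ∀ n, X n :=
  fun n => bond f n (m - n) (y (n + (m - n)))

theorem approxLift_compat (y : ∀ n, X n) {m n : ℕ} (h : n + 1 ≤ m) :
    f n (approxLift f y m (n + 1)) = approxLift f y m n := by
  obtain ⟨r, rfl⟩ := Nat.exists_eq_add_of_le h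
  unfold approxLift
  rw [show n + 1 + r - (n + 1) = r by omega, show n + 1 + r - n = r + 1 by omega]
  exact (bond_succ_apply f y n r).symm

theorem approxLift_mem {A : ∀ n, Set (X n)} (hfA : ∀ n, Set.MapsTo (f n) (A (n + 1)) (A n))
    {y : ∀ n, X n} (hyA : ∀ n, y n ∈ A n) (m n : ℕ) : approxLift f y m n ∈ A n :=
  mapsTo_bond f hfA n _ (hyA _)

end Bond

abbrev InverseLimit {X : ℕ → Type*} (f : ∀ n, X (n + 1) → X n) :=
  {x : ∀ n, X n // ∀ n, f n (x (n + 1)) = x n}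

/-- `F_N(x) = lim_k g^{N+k}_N (x_{N+k})`; a junk value when the limit does not exist. -/
noncomputable def comparison {X : ℕ → Type*} [∀ n, TopologicalSpace (X n)]
    (g : ∀ n, X (n + 1) → X n) (x : ∀ n, X n) (N : ℕ) : X N :=
  haveI : Nonempty (X N) := ⟨x N⟩
  limUnder atTop fun k => bond g N k (x (N + k))

section Comparison

variable {X : ℕ → Type*} [∀ n, MetricSpace (X n)] {f g : ∀ n, X (n + 1) → X n} {a b : ℕ → ℝ}

theorem dist_bond_lt_of_lebesgue
    (hLeb : ∀ i k, ∀ x y : X (i + (k + 1)), dist x y < a (i + (k + 1)) →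
      dist (bond g i (k + 1) x) (bond g i (k + 1) y) < b (i + (k + 1)))
    (hclose : ∀ i, ∀ x : X (i + 1), dist (f i x) (g i x) < a i) (N k : ℕ)
    (w : X (N + (k + 1) + 1)) :
    dist (bond g N (k + 1) (f _ w)) (bond g N (k + 1) (g _ w)) < b (N + (k + 1)) :=
  hLeb N k _ _ (hclose _ w)

variable (hb : ∀ N k (w : X (N + (k + 1) + 1)),
    dist (bond g N (k + 1) (f _ w)) (bond g N (k + 1) (g _ w)) < b (N + (k + 1)))
  (hbs : Summable b)

include hb in
theorem dist_bond_apply_succ_lt {x : ∀ n, X n} (hx : ∀ n, f n (x (n + 1)) = x n) (N k : ℕ) :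
    dist (bond g N (k + 1) (x (N + (k + 1)))) (bond g N (k + 1 + 1) (x (N + (k + 1 + 1)))) <
      b (N + (k + 1)) := by
  rw [← hx]
  exact hb N k _

include hbs in
theorem summable_shift_succ (N : ℕ) : Summable fun k => b (N + (k + 1)) :=
  (summable_nat_add_iff (N + 1)).2 hbs |>.congr fun k => by ring_nf

include hb hbs in
theorem cauchySeq_bond_apply {x : ∀ n, X n} (hx : ∀ n, f n (x (n + 1)) = x n) (N : ℕ) :
    CauchySeq fun k => bond g N k (x (N + k)) :=
  (cauchySeq_shift 1).1 <| cauchySeq_of_dist_le_of_summable _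
    (fun k => (dist_bond_apply_succ_lt hb hx N k).le) (summable_shift_succ hbs N)

variable [∀ n, CompleteSpace (X n)]

include hb hbs in
theorem tendsto_comparison {x : ∀ n, X n} (hx : ∀ n, f n (x (n + 1)) = x n) (N : ℕ) :
    Tendsto (fun k => bond g N k (x (N + k))) atTop (𝓝 (comparison g x N)) :=
  haveI : Nonempty (X N) := ⟨x N⟩
  (cauchySeq_bond_apply hb hbs hx N).tendsto_limUnder

include hb hbs in
theorem dist_bond_comparison_le {x : ∀ n, X n} (hx : ∀ n, f n (x (n + 1)) = x n) (N k : ℕ) :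
    dist (bond g N (k + 1) (x (N + (k + 1)))) (comparison g x N) ≤
      ∑' t, b (t + (N + (k + 1))) :=
  (dist_le_tsum_of_dist_le_of_tendsto _ (fun k => (dist_bond_apply_succ_lt hb hx N k).le)
    (summable_shift_succ hbs N) ((tendsto_add_atTop_iff_nat 1).2 (tendsto_comparison hb hbs hx N))
    k).trans_eq (tsum_congr fun t => by ring_nf)

theorem tendsto_tsum_tail (N : ℕ) :
    Tendsto (fun k => ∑' t, b (t + (N + (k + 1)))) atTop (𝓝 0) :=
  (tendsto_sum_nat_add b).comp (tendsto_atTop_mono (fun k => by dsimp only [id]; omega) tendsto_id)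

include hb hbs in
theorem comparison_eq_of_dist_le {x : ∀ n, X n} (hx : ∀ n, f n (x (n + 1)) = x n) {N : ℕ}
    {p : X N}
    (hp : ∀ k, dist (bond g N (k + 1) (x (N + (k + 1)))) p ≤ ∑' t, b (t + (N + (k + 1)))) :
    comparison g x N = p := by
  refine tendsto_nhds_unique ((tendsto_add_atTop_iff_nat 1).2 (tendsto_comparison hb hbs hx N)) ?_
  exact tendsto_iff_dist_tendsto_zero.2 <|
    squeeze_zero (fun _ => dist_nonneg) hp (tendsto_tsum_tail N)

include hb hbs in
theorem comparison_compat (hg : ∀ n, Continuous (g n)) {x : ∀ n, X n}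
    (hx : ∀ n, f n (x (n + 1)) = x n) (N : ℕ) :
    g N (comparison g x (N + 1)) = comparison g x N := by
  refine tendsto_nhds_unique (((hg N).tendsto _).comp (tendsto_comparison hb hbs hx (N + 1))) ?_
  refine ((tendsto_add_atTop_iff_nat 1).2 (tendsto_comparison hb hbs hx N)).congr fun k => ?_
  exact bond_succ_apply g x N k

include hb hbs in
theorem continuous_comparison (hg : ∀ n, Continuous (g n)) (N : ℕ) :
    Continuous fun x : InverseLimit f => comparison g x.1 N := by
  have hunif : TendstoUniformly
      (fun k (x : InverseLimit f) => bond g N (k + 1) (x.1 (N + (k + 1))))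
      (fun x => comparison g x.1 N) atTop := by
    refine Metric.tendstoUniformly_iff.2 fun ε hε => ?_
    filter_upwards [(tendsto_tsum_tail N).eventually (gt_mem_nhds hε)] with k hk x
    rw [dist_comm]
    exact (dist_bond_comparison_le hb hbs x.2 N k).trans_lt hk
  exact hunif.continuous <| Frequently.of_forall fun k =>
    (continuous_bond g hg N _).comp ((continuous_apply _).comp continuous_subtype_val)

include hb hbs in
theorem comparison_mem {A : ∀ n, Set (X n)} (hA : ∀ n, IsClosed (A n))
    (hgA : ∀ n, Set.MapsTo (g n) (A (n + 1)) (A n)) {x : ∀ n, X n}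
    (hx : ∀ n, f n (x (n + 1)) = x n) (hxA : ∀ n, x n ∈ A n) (N : ℕ) :
    comparison g x N ∈ A N :=
  (hA N).mem_of_tendsto (tendsto_comparison hb hbs hx N) <|
    Eventually.of_forall fun k => mapsTo_bond g hgA N k (hxA (N + k))

end Comparison

section Surjectivity

variable {X : ℕ → Type*} [∀ n, MetricSpace (X n)] {f g : ∀ n, X (n + 1) → X n} {b : ℕ → ℝ}
  (hb : ∀ N k (w : X (N + (k + 1) + 1)),
    dist (bond g N (k + 1) (f _ w)) (bond g N (k + 1) (g _ w)) < b (N + (k + 1)))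
  (hb0 : ∀ i, 0 ≤ b i) (hbs : Summable b)

include hb hb0 hbs in
theorem dist_bond_bond_le {y : ∀ n, X n} (hy : ∀ n, g n (y (n + 1)) = y n) (N r k : ℕ) :
    dist (bond g N (k + 1) (bond f (N + (k + 1)) r (y (N + (k + 1) + r)))) (y N) ≤
      ∑' t, b (t + (N + (k + 1))) := by
  induction r generalizing k with
  | zero =>
    change dist (bond g N (k + 1) (y (N + (k + 1)))) (y N) ≤ _
    rw [bond_apply_of_compat g hy, dist_self]
    exact tsum_nonneg fun t => hb0 _
  | succ r ih =>
    set w := bond f (N + (k + 1) + 1) r (y (N + (k + 1) + 1 + r))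
    rw [bond_succ_apply f y]
    calc dist (bond g N (k + 1) (f _ w)) (y N)
        ≤ dist (bond g N (k + 1) (f _ w)) (bond g N (k + 1) (g _ w)) +
            dist (bond g N (k + 1 + 1) w) (y N) := dist_triangle _ _ _
      _ ≤ b (N + (k + 1)) + ∑' t, b (t + (N + (k + 1 + 1))) := add_le_add (hb N k w).le (ih _)
      _ = ∑' t, b (t + (N + (k + 1))) := by
        rw [((summable_nat_add_iff (N + (k + 1))).2 hbs).tsum_eq_zero_add, zero_add]
        congr 2 with t
        ring_nf

include hb hb0 hbs in
theorem dist_bond_approxLift_le {y : ∀ n, X n} (hy : ∀ n, g n (y (n + 1)) = y n) {m N k : ℕ}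
    (h : N + (k + 1) ≤ m) :
    dist (bond g N (k + 1) (approxLift f y m (N + (k + 1)))) (y N) ≤
      ∑' t, b (t + (N + (k + 1))) := by
  obtain ⟨r, rfl⟩ := Nat.exists_eq_add_of_le h
  unfold approxLift
  rw [Nat.add_sub_cancel_left]
  exact dist_bond_bond_le hb hb0 hbs hy N r k

variable [∀ n, CompactSpace (X n)]

include hb hb0 hbs in
theorem exists_compat_forall_dist_bond_le {A : ∀ n, Set (X n)} (hA : ∀ n, IsClosed (A n))
    (hf : ∀ n, Continuous (f n)) (hg : ∀ n, Continuous (g n))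
    (hfA : ∀ n, Set.MapsTo (f n) (A (n + 1)) (A n)) {y : ∀ n, X n}
    (hy : ∀ n, g n (y (n + 1)) = y n) (hyA : ∀ n, y n ∈ A n) :
    ∃ z : ∀ n, X n, (∀ n, f n (z (n + 1)) = z n) ∧ (∀ n, z n ∈ A n) ∧
      ∀ N k, dist (bond g N (k + 1) (z (N + (k + 1)))) (y N) ≤ ∑' t, b (t + (N + (k + 1))) := by
  obtain ⟨z, hz⟩ := exists_clusterPt_of_compactSpace (map (approxLift f y) atTop)
  refine ⟨z, fun n => ?_, fun n => ?_, fun N k => ?_⟩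
  · exact (isClosed_eq ((hf n).comp (continuous_apply _)) (continuous_apply n)).mem_of_mapClusterPt
      hz <| eventually_ge_atTop (n + 1) |>.mono fun m hm => approxLift_compat f y hm
  · exact ((hA n).preimage (continuous_apply n)).mem_of_mapClusterPt hz <|
      Eventually.of_forall fun m => approxLift_mem f hfA hyA m n
  · refine (isClosed_le (((continuous_bond g hg N _).comp (continuous_apply _)).dist
      continuous_const) continuous_const).mem_of_mapClusterPt hz ?_
    exact eventually_ge_atTop _ |>.mono fun m hm => dist_bond_approxLift_le hb hb0 hbs hy hm

include hb hb0 hbs in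
theorem exists_comparison_eq {A : ∀ n, Set (X n)} (hA : ∀ n, IsClosed (A n))
    (hf : ∀ n, Continuous (f n)) (hg : ∀ n, Continuous (g n))
    (hfA : ∀ n, Set.MapsTo (f n) (A (n + 1)) (A n)) {y : ∀ n, X n}
    (hy : ∀ n, g n (y (n + 1)) = y n) (hyA : ∀ n, y n ∈ A n) :
    ∃ x : ∀ n, X n, (∀ n, f n (x (n + 1)) = x n) ∧ (∀ n, x n ∈ A n) ∧ comparison g x = y := by
  obtain ⟨x, hx, hxA, hxy⟩ := exists_compat_forall_dist_bond_le hb hb0 hbs hA hf hg hfA hy hyA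
  exact ⟨x, hx, hxA, funext fun N => comparison_eq_of_dist_le hb hbs hx (hxy N)⟩

end Surjectivity

theorem brown_comparison_surjection_pairs_general
    (X : ℕ → Type) [∀ n, MetricSpace (X n)] [∀ n, CompactSpace (X n)]
    (A : ∀ n, Set (X n)) (hA : ∀ n, IsCompact (A n))
    (f g : ∀ n, X (n + 1) → X n)
    (hf : ∀ n, Continuous (f n)) (hg : ∀ n, Continuous (g n))
    (hfA : ∀ n, Set.MapsTo (f n) (A (n + 1)) (A n))
    (hgA : ∀ n, Set.MapsTo (g n) (A (n + 1)) (A n))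
    (a : ℕ → ℝ)
    (hLeb : ∃ b : ℕ → ℝ, (∀ i, 0 < b i) ∧ Summable b ∧
      ∀ i k, ∀ x y : X (i + (k + 1)), dist x y < a (i + (k + 1)) →
        dist (bond g i (k + 1) x) (bond g i (k + 1) y) < b (i + (k + 1)))
    (hclose : ∀ i, ∀ x : X (i + 1), dist (f i x) (g i x) < a i) :
    ∃ F : ∀ N, {x : ∀ n, X n // ∀ n, f n (x (n + 1)) = x n} → X N,
      (∀ N x, Tendsto (fun k => bond g N k (x.1 (N + k))) atTop (𝓝 (F N x))) ∧
      ∃ Fhat : {x : ∀ n, X n // ∀ n, f n (x (n + 1)) = x n} →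
          {y : ∀ n, X n // ∀ n, g n (y (n + 1)) = y n},
        (∀ x N, (Fhat x).1 N = F N x) ∧ Continuous Fhat ∧
        Set.MapsTo Fhat {x | ∀ n, x.1 n ∈ A n} {y | ∀ n, y.1 n ∈ A n} ∧
        Set.SurjOn Fhat {x | ∀ n, x.1 n ∈ A n} {y | ∀ n, y.1 n ∈ A n} := by
  obtain ⟨b, hb0, hbs, hLeb⟩ := hLeb
  have hb := dist_bond_lt_of_lebesgue hLeb hclose
  have hAc : ∀ n, IsClosed (A n) := fun n => (hA n).isClosed
  refine ⟨fun N x => comparison g x.1 N, fun N x => tendsto_comparison hb hbs x.2 N,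
    fun x => ⟨comparison g x.1, comparison_compat hb hbs hg x.2⟩, fun _ _ => rfl,
    (continuous_pi fun N => continuous_comparison hb hbs hg N).subtype_mk _,
    fun x hx => comparison_mem hb hbs hAc hgA x.2 hx, fun y hy => ?_⟩
  obtain ⟨x, hx, hxA, hxy⟩ :=
    exists_comparison_eq hb (fun i => (hb0 i).le) hbs hAc hf hg hfA y.2 hy
  exact ⟨⟨x, hx⟩, hxA, Subtype.ext hxy⟩

/-- Brown's proposition for pairs: given two inverse sequences on the same compact metric
spaces `X_i` with compact subsets `A_i` preserved by both families of bonding maps, where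
`(a_i)` is a Lebesgue sequence for `(X_i, g_i)` and `dist (f_{i+1} x) (g_{i+1} x) < a_i`
for all `x`, the maps `F_N(x) = lim_n g^n_N (f^∞_n x)` exist, assemble into a well-defined
continuous map `F : lim (X_i, f_i) → lim (X_i, g_i)` with `F(A) ⊆ B`, and the restriction
`F|_A : A → B` is surjective. -/
theorem brown_comparison_surjection_pairs
    (X : ℕ → Type) [∀ n, MetricSpace (X n)] [∀ n, CompactSpace (X n)]
    (A : ∀ n, Set (X n)) (hA : ∀ n, IsCompact (A n))
    (f g : ∀ n, X (n + 1) → X n)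
    (hf : ∀ n, Continuous (f n)) (hg : ∀ n, Continuous (g n))
    (hfA : ∀ n, Set.MapsTo (f n) (A (n + 1)) (A n))
    (hgA : ∀ n, Set.MapsTo (g n) (A (n + 1)) (A n))
    (a : ℕ → ℝ) (ha : ∀ i, 0 < a i)
    (hLeb : ∃ b : ℕ → ℝ, (∀ i, 0 < b i) ∧ Summable b ∧
      ∀ i k, ∀ x y : X (i + (k + 1)), dist x y < a (i + (k + 1)) →
        dist (bond g i (k + 1) x) (bond g i (k + 1) y) < b (i + (k + 1)))
    (hclose : ∀ i, ∀ x : X (i + 1), dist (f i x) (g i x) < a i) :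
    ∃ F : ∀ N, {x : ∀ n, X n // ∀ n, f n (x (n + 1)) = x n} → X N,
      (∀ N x, Tendsto (fun k => bond g N k (x.1 (N + k))) atTop (𝓝 (F N x))) ∧
      ∃ Fhat : {x : ∀ n, X n // ∀ n, f n (x (n + 1)) = x n} →
          {y : ∀ n, X n // ∀ n, g n (y (n + 1)) = y n},
        (∀ x N, (Fhat x).1 N = F N x) ∧ Continuous Fhat ∧
        Set.MapsTo Fhat {x | ∀ n, x.1 n ∈ A n} {y | ∀ n, y.1 n ∈ A n} ∧
        Set.SurjOn Fhat {x | ∀ n, x.1 n ∈ A n} {y | ∀ n, y.1 n ∈ A n} :=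
  brown_comparison_surjection_pairs_general X A hA f g hf hg hfA hgA a hLeb hclose
end

section
/- Let (X_i, f_i) be an inverse sequence of compact metric spaces with inverse limit X = lim(X_i, f_i). For each i, let K_i be a nonempty collection of continuous maps X_{i+1} → X_i, and suppose that for every i and every ε > 0 there exists g ∈ K_i with sup_{x ∈ X_{i+1}} dist(f_{i+1}(x), g(x)) < ε. Then there is a sequence (g_i) with g_i ∈ K_i for every i such that X is homeomorphic to the inverse limit lim(X_i, g_i). -/
/-!
Choose `g k ∈ K k` recursively together with radii `δ k` (halving at each step) such that
`δ k` is a modulus of uniform continuity, at precision `2⁻ᵏ`, for all composites `X k → X n` of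
both `f` and `g`, and `g k` is so close to `f k` that substituting it moves each of these
composites by at most `δ k / 4`. For an `f`-thread `x` the points `g^m_n (x m)` then form a Cauchy
sequence in `m`; their limits form a `g`-thread lying within `δ k / 2` of `x` at every level `k`,
uniformly in `x`, so this is a continuous map. The symmetric construction maps back, and the
round trip moves each `x k` by at most `δ k`, which the modulus condition turns into
`dist (x n) (x' n) ≤ 2⁻ᵏ` for all `k ≥ n`: the two maps are mutually inverse.
-/

open Filter Topology

theorem Filter.Tendsto.comp_nat_add {β : Type*} {ε : ℕ → β} {l : Filter β}
    (hε : Tendsto ε atTop l) (n : ℕ) : Tendsto (fun m => ε (n + m)) atTop l :=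
  hε.comp (tendsto_atTop_mono (fun m => Nat.le_add_left m n) tendsto_id)

section Telescoping

variable {α : Type*} [PseudoMetricSpace α] {a : ℕ → α} {ε : ℕ → ℝ}

theorem dist_le_sub_of_dist_succ_le_sub (h : ∀ m, dist (a m) (a (m + 1)) ≤ ε m - ε (m + 1))
    {m n : ℕ} (hmn : m ≤ n) : dist (a m) (a n) ≤ ε m - ε n := by
  induction n, hmn using Nat.le_induction with
  | base => simp
  | succ n _ ih => linarith [dist_triangle (a m) (a n) (a (n + 1)), h n]

theorem exists_tendsto_dist_le_of_dist_succ_le_sub [CompleteSpace α]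
    (h : ∀ m, dist (a m) (a (m + 1)) ≤ ε m - ε (m + 1)) (hε : Tendsto ε atTop (𝓝 0)) :
    ∃ L, Tendsto a atTop (𝓝 L) ∧ ∀ m, dist (a m) L ≤ ε m := by
  have hcauchy : CauchySeq a := by
    refine Metric.cauchySeq_iff'.2 fun r hr => ?_
    obtain ⟨N, hN⟩ := Metric.tendsto_atTop.1 hε (r / 2) (half_pos hr)
    refine ⟨N, fun n hn => ?_⟩
    have hεN := hN N le_rfl
    have hεn := hN n hn
    rw [Real.dist_0_eq_abs, abs_lt] at hεN hεn
    linarith [dist_comm (a n) (a N), dist_le_sub_of_dist_succ_le_sub h hn]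
  obtain ⟨L, hL⟩ := cauchySeq_tendsto_of_complete hcauchy
  refine ⟨L, hL, fun m => ?_⟩
  have hlim := le_of_tendsto_of_tendsto (tendsto_const_nhds.dist hL) (tendsto_const_nhds.sub hε)
    (eventually_atTop.2 ⟨m, fun n hn => dist_le_sub_of_dist_succ_le_sub h hn⟩)
  rwa [sub_zero] at hlim

end Telescoping

namespace InverseSequence

variable {X : ℕ → Type*}

def comp (u : ∀ n, X (n + 1) → X n) (n : ℕ) : ∀ m, X (n + m) → X n
  | 0 => id
  | m + 1 => comp u n m ∘ u (n + m)

abbrev Limit (u : ∀ n, X (n + 1) → X n) : Type _ :=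
  {x : ∀ n, X n // ∀ n, u n (x (n + 1)) = x n}

variable {u v : ∀ n, X (n + 1) → X n}

theorem comp_congr {n m : ℕ} (h : ∀ j < n + m, u j = v j) : comp u n m = comp v n m := by
  induction m with
  | zero => rfl
  | succ m ih =>
    simp only [comp, ih fun j hj => h j (by omega), h (n + m) (by omega)]

theorem Limit.comp_apply (x : Limit u) (n m : ℕ) : comp u n m (x.1 (n + m)) = x.1 n := by
  induction m with
  | zero => rfl
  | succ m ih =>
    show comp u n m (u (n + m) (x.1 (n + m + 1))) = x.1 n
    rw [x.2, ih]

/-- Stated for every `x` so that the induction can replace `x` by `fun i ↦ u i (x (i + 1))`;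
this avoids casting between `X (n + 1 + m)` and `X (n + m + 1)`. -/
theorem apply_comp (x : ∀ n, X n) (n m : ℕ) :
    u n (comp u (n + 1) m (x (n + 1 + m))) = comp u n (m + 1) (x (n + m + 1)) := by
  induction m generalizing x with
  | zero => rfl
  | succ m ih => exact ih fun i => u i (x (i + 1))

section Topology

variable [∀ n, TopologicalSpace (X n)]

theorem continuous_comp (hu : ∀ n, Continuous (u n)) (n : ℕ) : ∀ m, Continuous (comp u n m)
  | 0 => continuous_id
  | m + 1 => (continuous_comp hu n m).comp (hu (n + m))

end Topology

section Metric

variable [∀ n, MetricSpace (X n)]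

def IsModulusAt (u : ∀ n, X (n + 1) → X n) (k : ℕ) (δ ε : ℝ) : Prop :=
  ∀ n m, n + m = k → ∀ z w : X (n + m), dist z w ≤ δ → dist (comp u n m z) (comp u n m w) ≤ ε

def StepCloseAt (u : ∀ n, X (n + 1) → X n) (k : ℕ) (v w : ∀ n, X (n + 1) → X n) (ε : ℝ) :
    Prop :=
  ∀ n m, n + m = k → ∀ z : X (n + m + 1),
    dist (comp u n m (v (n + m) z)) (comp u n m (w (n + m) z)) ≤ ε

theorem exists_continuous_limit_map [∀ n, CompleteSpace (X n)] (hu : ∀ n, Continuous (u n))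
    {ε : ℕ → ℝ} (hε : Tendsto ε atTop (𝓝 0)) (hstep : ∀ k, StepCloseAt u k v u (ε k - ε (k + 1))) :
    ∃ Φ : Limit v → Limit u, Continuous Φ ∧ ∀ x k, dist (x.1 k) ((Φ x).1 k) ≤ ε k := by
  have hseq (x : Limit v) (n m : ℕ) : dist (comp u n m (x.1 (n + m)))
      (comp u n (m + 1) (x.1 (n + (m + 1)))) ≤ ε (n + m) - ε (n + (m + 1)) := by
    have h := hstep (n + m) n m rfl (x.1 (n + m + 1))
    rwa [x.2] at h
  choose L hL hLdist using fun (x : Limit v) n =>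
    exists_tendsto_dist_le_of_dist_succ_le_sub (hseq x n) (hε.comp_nat_add n)
  have hthread (x : Limit v) (n : ℕ) : u n (L x (n + 1)) = L x n := by
    refine tendsto_nhds_unique (((hu n).tendsto _).comp (hL x (n + 1))) ?_
    simp only [Function.comp_def, apply_comp]
    exact (hL x n).comp (tendsto_add_atTop_nat 1)
  have hcont (n : ℕ) : Continuous fun x => L x n := by
    refine TendstoUniformly.continuous (F := fun m x => comp u n m (x.1 (n + m))) ?_
      (Frequently.of_forall (f := atTop) fun m => ?_)
    · refine Metric.tendstoUniformly_iff.2 fun r hr => ?_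
      filter_upwards [(hε.comp_nat_add n).eventually_lt_const hr] with m hm x
      exact (dist_comm _ _).trans_le (hLdist x n m) |>.trans_lt hm
    · exact (continuous_comp hu n m).comp ((continuous_apply _).comp continuous_subtype_val)
  exact ⟨fun x => ⟨fun n => L x n, hthread x⟩, (continuous_pi hcont).subtype_mk _,
    fun x k => hLdist x k 0⟩

theorem Limit.eq_of_dist_le {δ ε : ℕ → ℝ} (hε : Tendsto ε atTop (𝓝 0))
    (hmod : ∀ k, IsModulusAt u k (δ k) (ε k)) {x y : Limit u}
    (hxy : ∀ k, dist (x.1 k) (y.1 k) ≤ δ k) : x = y := by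
  refine Subtype.ext (funext fun n => dist_le_zero.1 ?_)
  refine le_of_tendsto_of_tendsto' tendsto_const_nhds (hε.comp_nat_add n) fun m => ?_
  have h := hmod (n + m) n m rfl _ _ (hxy (n + m))
  rwa [x.comp_apply, y.comp_apply] at h

theorem StepCloseAt.symm {k : ℕ} {w : ∀ n, X (n + 1) → X n} {ε : ℝ}
    (h : StepCloseAt u k v w ε) : StepCloseAt u k w v ε := fun n m hk z => by
  rw [dist_comm]
  exact h n m hk z

theorem StepCloseAt.mono {k : ℕ} {w : ∀ n, X (n + 1) → X n} {ε ε' : ℝ}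
    (h : StepCloseAt u k v w ε) (hε : ε ≤ ε') : StepCloseAt u k v w ε' :=
  fun n m hk z => (h n m hk z).trans hε

theorem StepCloseAt.congr {k : ℕ} {u' w w' : ∀ n, X (n + 1) → X n} {ε : ℝ}
    (h : StepCloseAt u k v w ε) (hu : ∀ j < k, u j = u' j) (hw : w k = w' k) :
    StepCloseAt u' k v w' ε := by
  rintro n m rfl z
  rw [← comp_congr hu, ← hw]
  exact h n m rfl z

theorem IsModulusAt.congr {k : ℕ} {δ ε : ℝ} (h : IsModulusAt u k δ ε)
    (huv : ∀ j < k, u j = v j) : IsModulusAt v k δ ε := by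
  rintro n m rfl z w hzw
  rw [← comp_congr huv]
  exact h n m rfl z w hzw

theorem IsModulusAt.stepCloseAt {k : ℕ} {η ε : ℝ} {w : ∀ n, X (n + 1) → X n}
    (h : IsModulusAt u k η ε) (hvw : ∀ z, dist (v k z) (w k z) ≤ η) : StepCloseAt u k v w ε := by
  rintro n m rfl z
  exact h n m rfl _ _ (hvw z)

structure BrownCondition (f g : ∀ n, X (n + 1) → X n) (δ : ℕ → ℝ) : Prop where
  pos : ∀ k, 0 < δ k
  le_half : ∀ k, δ (k + 1) ≤ δ k / 2
  modulus_left : ∀ k, IsModulusAt f k (δ k) ((1 / 2) ^ k)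
  modulus_right : ∀ k, IsModulusAt g k (δ k) ((1 / 2) ^ k)
  step_left : ∀ k, StepCloseAt f k f g (δ k / 4)
  step_right : ∀ k, StepCloseAt g k f g (δ k / 4)

namespace BrownCondition

variable {f g : ∀ n, X (n + 1) → X n} {δ : ℕ → ℝ}

theorem symm (h : BrownCondition f g δ) : BrownCondition g f δ :=
  ⟨h.pos, h.le_half, h.modulus_right, h.modulus_left, fun k => (h.step_right k).symm,
    fun k => (h.step_left k).symm⟩

theorem tendsto_zero (h : BrownCondition f g δ) : Tendsto δ atTop (𝓝 0) := by
  have hle (k : ℕ) : δ k ≤ δ 0 * (1 / 2) ^ k := by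
    induction k with
    | zero => simp
    | succ k ih =>
      calc δ (k + 1) ≤ δ k / 2 := h.le_half k
        _ ≤ δ 0 * (1 / 2) ^ k / 2 := by linarith
        _ = δ 0 * (1 / 2) ^ (k + 1) := by ring
  refine squeeze_zero (fun k => (h.pos k).le) hle ?_
  simpa using (tendsto_pow_atTop_nhds_zero_of_lt_one (r := (1 / 2 : ℝ)) (by norm_num)
    (by norm_num)).const_mul (δ 0)

theorem exists_continuous_map [∀ n, CompleteSpace (X n)] (h : BrownCondition f g δ)
    (hg : ∀ n, Continuous (g n)) :
    ∃ Φ : Limit f → Limit g, Continuous Φ ∧ ∀ x k, dist (x.1 k) ((Φ x).1 k) ≤ δ k / 2 :=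
  exists_continuous_limit_map hg (by simpa using h.tendsto_zero.div_const 2) fun k =>
    (h.step_right k).mono (by linarith [h.le_half k])

theorem leftInverse {Φ : Limit f → Limit g} {Ψ : Limit g → Limit f} (h : BrownCondition f g δ)
    (hΦ : ∀ x k, dist (x.1 k) ((Φ x).1 k) ≤ δ k / 2)
    (hΨ : ∀ y k, dist (y.1 k) ((Ψ y).1 k) ≤ δ k / 2) : Function.LeftInverse Ψ Φ := by
  intro x
  refine Limit.eq_of_dist_le (tendsto_pow_atTop_nhds_zero_of_lt_one (r := (1 / 2 : ℝ))
    (by norm_num) (by norm_num)) h.modulus_left fun k => ?_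
  calc dist ((Ψ (Φ x)).1 k) (x.1 k)
      ≤ dist ((Φ x).1 k) ((Ψ (Φ x)).1 k) + dist ((Φ x).1 k) (x.1 k) := dist_triangle_left _ _ _
    _ ≤ δ k / 2 + δ k / 2 := add_le_add (hΨ (Φ x) k) (dist_comm (x.1 k) _ ▸ hΦ x k)
    _ = δ k := add_halves _

theorem nonempty_homeomorph [∀ n, CompleteSpace (X n)] (h : BrownCondition f g δ)
    (hf : ∀ n, Continuous (f n)) (hg : ∀ n, Continuous (g n)) :
    Nonempty (Limit f ≃ₜ Limit g) := by
  obtain ⟨Φ, hΦ, hΦdist⟩ := h.exists_continuous_map hg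
  obtain ⟨Ψ, hΨ, hΨdist⟩ := h.symm.exists_continuous_map hf
  exact ⟨⟨⟨Φ, Ψ, h.leftInverse hΦdist hΨdist, h.symm.leftInverse hΨdist hΦdist⟩, hΦ, hΨ⟩⟩

end BrownCondition

section Recursion

variable [∀ n, CompactSpace (X n)]

theorem eventually_isModulusAt (hu : ∀ n, Continuous (u n)) (k : ℕ) {ε : ℝ} (hε : 0 < ε) :
    ∀ᶠ δ in 𝓝[>] 0, IsModulusAt u k δ ε := by
  have h (p : ℕ × ℕ) (_ : p ∈ Finset.HasAntidiagonal.antidiagonal k) : ∀ᶠ δ in 𝓝[>] (0 : ℝ),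
      ∀ z w : X (p.1 + p.2), dist z w ≤ δ → dist (comp u p.1 p.2 z) (comp u p.1 p.2 w) ≤ ε := by
    obtain ⟨r, hr, hmod⟩ := Metric.uniformContinuous_iff.1
      (CompactSpace.uniformContinuous_of_continuous (continuous_comp hu p.1 p.2)) ε hε
    filter_upwards [Ioo_mem_nhdsGT hr] with δ hδ z w hzw
    exact (hmod (hzw.trans_lt hδ.2)).le
  filter_upwards [(eventually_all_finset _).2 h] with δ hδ n m hk
  exact hδ (n, m) (Finset.HasAntidiagonal.mem_antidiagonal.2 hk)

variable (X) in
structure Stage where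
  maps : ∀ n, X (n + 1) → X n
  continuous_maps : ∀ n, Continuous (maps n)
  radius : ℝ
  radius_pos : 0 < radius

/-- Stage `k + 1` of the recursion replaces `f k` by `g k = t.maps k`, with `t.radius = δ k`.
The radius only involves composites of maps fixed before `g k`, so it is chosen first, and then
`g k` is taken close enough to `f k` for the step estimates at that radius. -/
structure Stage.IsNext (f : ∀ n, X (n + 1) → X n) (K : ∀ i, Set (X (i + 1) → X i)) (k : ℕ)
    (s t : Stage X) : Prop where
  radius_le : t.radius ≤ s.radius / 2
  mem : t.maps k ∈ K k
  maps_of_ne : ∀ j ≠ k, t.maps j = s.maps j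
  modulus_left : IsModulusAt f k t.radius ((1 / 2) ^ k)
  modulus_right : IsModulusAt s.maps k t.radius ((1 / 2) ^ k)
  step_left : StepCloseAt f k f t.maps (t.radius / 4)
  step_right : StepCloseAt s.maps k f t.maps (t.radius / 4)

variable {f : ∀ n, X (n + 1) → X n} {K : ∀ i, Set (X (i + 1) → X i)}

theorem Stage.exists_isNext (hf : ∀ n, Continuous (f n)) (hKcont : ∀ i, ∀ g ∈ K i, Continuous g)
    (happrox : ∀ i, ∀ ε > (0 : ℝ), ∃ g ∈ K i, ∀ x, dist (f i x) (g x) < ε) (k : ℕ)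
    (s : Stage X) : ∃ t, Stage.IsNext f K k s t := by
  have hpow : (0 : ℝ) < (1 / 2) ^ k := by positivity
  obtain ⟨r, hrf, hrs, hr⟩ := ((eventually_isModulusAt hf k hpow).and
    ((eventually_isModulusAt s.continuous_maps k hpow).and
      (Ioo_mem_nhdsGT (half_pos s.radius_pos)))).exists
  have hr4 : 0 < r / 4 := by linarith [hr.1]
  obtain ⟨η, hηf, hηs, hη⟩ := ((eventually_isModulusAt hf k hr4).and
    ((eventually_isModulusAt s.continuous_maps k hr4).and self_mem_nhdsWithin)).exists
  obtain ⟨g, hgK, hg⟩ := happrox k η hη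
  have hcont (j : ℕ) : Continuous (Function.update s.maps k g j) := by
    rcases eq_or_ne j k with rfl | hj
    · simpa using hKcont j g hgK
    · simpa [Function.update_of_ne hj] using s.continuous_maps j
  have hclose (z : X (k + 1)) : dist (f k z) (Function.update s.maps k g k z) ≤ η := by
    simpa using (hg z).le
  exact ⟨⟨Function.update s.maps k g, hcont, r, hr.1⟩, hr.2.le, by simpa using hgK,
    fun j hj => Function.update_of_ne hj _ _, hrf, hrs, hηf.stepCloseAt hclose,
    hηs.stepCloseAt hclose⟩

noncomputable def stage (hf : ∀ n, Continuous (f n)) (hKcont : ∀ i, ∀ g ∈ K i, Continuous g)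
    (happrox : ∀ i, ∀ ε > (0 : ℝ), ∃ g ∈ K i, ∀ x, dist (f i x) (g x) < ε) : ℕ → Stage X
  | 0 => ⟨f, hf, 1, one_pos⟩
  | k + 1 => Classical.choose (Stage.exists_isNext hf hKcont happrox k (stage hf hKcont happrox k))

theorem exists_brownCondition (hf : ∀ n, Continuous (f n))
    (hKcont : ∀ i, ∀ g ∈ K i, Continuous g)
    (happrox : ∀ i, ∀ ε > (0 : ℝ), ∃ g ∈ K i, ∀ x, dist (f i x) (g x) < ε) :
    ∃ g : ∀ n, X (n + 1) → X n, ∃ δ : ℕ → ℝ, (∀ i, g i ∈ K i) ∧ BrownCondition f g δ := by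
  set S := stage hf hKcont happrox
  have hnext (k : ℕ) : Stage.IsNext f K k (S k) (S (k + 1)) :=
    Classical.choose_spec (Stage.exists_isNext hf hKcont happrox k (S k))
  set g : ∀ n, X (n + 1) → X n := fun k => (S (k + 1)).maps k
  have hagree (k : ℕ) : ∀ j < k, (S k).maps j = g j := by
    induction k with
    | zero => intro j hj; omega
    | succ k ih =>
      intro j hj
      rcases Nat.lt_succ_iff_lt_or_eq.1 hj with hj | rfl
      · rw [(hnext k).maps_of_ne j hj.ne, ih j hj]
      · rfl
  exact ⟨g, fun k => (S (k + 1)).radius, fun i => (hnext i).mem,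
    ⟨fun k => (S (k + 1)).radius_pos, fun k => (hnext (k + 1)).radius_le,
      fun k => (hnext k).modulus_left, fun k => (hnext k).modulus_right.congr (hagree k),
      fun k => (hnext k).step_left.congr (fun _ _ => rfl) rfl,
      fun k => (hnext k).step_right.congr (hagree k) rfl⟩⟩

end Recursion

end Metric

end InverseSequence

theorem brown_approximation_inverse_limit_general
    (X : ℕ → Type) [∀ n, MetricSpace (X n)] [∀ n, CompactSpace (X n)]
    (f : ∀ n, X (n + 1) → X n) (hf : ∀ n, Continuous (f n))
    (K : ∀ i, Set (X (i + 1) → X i))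
    (hKcont : ∀ i, ∀ g ∈ K i, Continuous g)
    (happrox : ∀ i, ∀ ε > (0 : ℝ), ∃ g ∈ K i, ∀ x, dist (f i x) (g x) < ε) :
    ∃ g : ∀ n, X (n + 1) → X n, (∀ i, g i ∈ K i) ∧
      Nonempty ({x : ∀ n, X n // ∀ n, f n (x (n + 1)) = x n} ≃ₜ
        {y : ∀ n, X n // ∀ n, g n (y (n + 1)) = y n}) := by
  obtain ⟨g, δ, hgK, hbrown⟩ := InverseSequence.exists_brownCondition hf hKcont happrox
  exact ⟨g, hgK, hbrown.nonempty_homeomorph hf fun n => hKcont n _ (hgK n)⟩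

/-- Brown's approximation theorem: if each bonding map `f_{i+1}` of an inverse sequence of
compact metric spaces can be approximated arbitrarily well by maps from a nonempty
collection `K_i` of continuous maps, then one may choose `g_i ∈ K_i` so that the two
inverse limits are homeomorphic. -/
theorem brown_approximation_inverse_limit
    (X : ℕ → Type) [∀ n, MetricSpace (X n)] [∀ n, CompactSpace (X n)]
    (f : ∀ n, X (n + 1) → X n) (hf : ∀ n, Continuous (f n))
    (K : ∀ i, Set (X (i + 1) → X i))
    (hKne : ∀ i, (K i).Nonempty)
    (hKcont : ∀ i, ∀ g ∈ K i, Continuous g)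
    (happrox : ∀ i, ∀ ε > (0 : ℝ), ∃ g ∈ K i, ∀ x, dist (f i x) (g x) < ε) :
    ∃ g : ∀ n, X (n + 1) → X n, (∀ i, g i ∈ K i) ∧
      Nonempty ({x : ∀ n, X n // ∀ n, f n (x (n + 1)) = x n} ≃ₜ
        {y : ∀ n, X n // ∀ n, g n (y (n + 1)) = y n}) :=
  brown_approximation_inverse_limit_general X f hf K hKcont happrox
end

section
/- Let X_i (i ∈ ℕ) be compact metric spaces equipped with two sequences of bonding maps f_{i+1}, g_{i+1} : X_{i+1} → X_i, and let X = lim(X_i, f_i). Suppose (a_i) is a Lebesgue sequence for (X_i, g_i) and that sup_{x ∈ X_{i+1}} dist(f_{i+1}(x), g_{i+1}(x)) < a_i for every i. Then for every N, the sequence of continuous maps (g^n_N ∘ f^∞_n : X → X_N)_{n ≥ N} converges uniformly on X, and its limit is a continuous map F_N : X → X_N. -/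
open Filter Topology

theorem bond_continuous {X : ℕ → Type*} [∀ n, TopologicalSpace (X n)]
    (f : ∀ n, X (n + 1) → X n) (hf : ∀ n, Continuous (f n)) (i : ℕ) :
    ∀ k, Continuous (bond f i k)
  | 0 => continuous_id
  | k + 1 => (bond_continuous f hf i k).comp (hf (i + k))

/-- Given two inverse sequences on the same compact metric spaces `X_i`, with bonding maps
`f` and `g`, where `(a_i)` is a Lebesgue sequence for `(X_i, g_i)` and
`dist (f_{i+1} x) (g_{i+1} x) < a_i` for all `x`, the sequence of continuous maps
`g^n_N ∘ f^∞_n : lim (X_i, f_i) → X_N` (for `n ≥ N`) converges uniformly, and its limit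
is a continuous map `F_N`. -/
theorem brown_uniform_convergence
    (X : ℕ → Type) [∀ n, MetricSpace (X n)] [∀ n, CompactSpace (X n)]
    (f g : ∀ n, X (n + 1) → X n)
    (hf : ∀ n, Continuous (f n)) (hg : ∀ n, Continuous (g n))
    (a : ℕ → ℝ) (ha : ∀ i, 0 < a i)
    (hLeb : ∃ b : ℕ → ℝ, (∀ i, 0 < b i) ∧ Summable b ∧
      ∀ i k, ∀ x y : X (i + (k + 1)), dist x y < a (i + (k + 1)) →
        dist (bond g i (k + 1) x) (bond g i (k + 1) y) < b (i + (k + 1)))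
    (hclose : ∀ i, ∀ x : X (i + 1), dist (f i x) (g i x) < a i) (N : ℕ) :
    ∃ F : {x : ∀ n, X n // ∀ n, f n (x (n + 1)) = x n} → X N,
      Continuous F ∧
      TendstoUniformly
        (fun k (x : {x : ∀ n, X n // ∀ n, f n (x (n + 1)) = x n}) =>
          bond g N k (x.1 (N + k))) F atTop := by
  obtain ⟨b, hbpos, hbsum, hb⟩ := hLeb
  -- The inverse limit is compact (closed subset of a compact product).
  haveI : CompactSpace {x : ∀ n, X n // ∀ n, f n (x (n + 1)) = x n} := by
    have hclosed : IsClosed {x : ∀ n, X n | ∀ n, f n (x (n + 1)) = x n} := by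
      have : {x : ∀ n, X n | ∀ n, f n (x (n + 1)) = x n} =
          ⋂ n, {x : ∀ n, X n | f n (x (n + 1)) = x n} := by
        ext x; simp [Set.mem_iInter]
      rw [this]
      exact isClosed_iInter fun n =>
        isClosed_eq ((hf n).comp (continuous_apply (n + 1))) (continuous_apply n)
    exact isCompact_iff_compactSpace.mp hclosed.isCompact
  -- The sequence of continuous maps.
  set Y := {x : ∀ n, X n // ∀ n, f n (x (n + 1)) = x n}
  have hcont : ∀ k, Continuous (fun x : Y => bond g N k (x.1 (N + k))) := fun k =>
    (bond_continuous g hg N k).comp ((continuous_apply (N + k)).comp continuous_subtype_val)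
  set U : ℕ → C(Y, X N) := fun k => ⟨fun x => bond g N k (x.1 (N + k)), hcont k⟩ with hU
  -- The summable bound.
  set c : ℕ → ℝ := fun k => if k = 0 then a N else b (N + k) with hc
  have hcpos : ∀ k, 0 < c k := by
    intro k
    rcases k with _ | k
    · simpa [hc] using ha N
    · simpa [hc] using hbpos (N + (k + 1))
  have hcsum : Summable c := by
    rw [← summable_nat_add_iff 1]
    have : (fun n => c (n + 1)) = fun n => b (n + (N + 1)) := by
      funext n
      have : N + (n + 1) = n + (N + 1) := by omega
      simp [hc, this]
    rw [this]
    exact (summable_nat_add_iff (N + 1)).mpr hbsum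
  -- pointwise distance bound
  have hdist : ∀ k, dist (U k) (U (k + 1)) ≤ c k := by
    intro k
    rw [ContinuousMap.dist_le (hcpos k).le]
    intro x
    have hx : x.1 (N + k) = f (N + k) (x.1 (N + k + 1)) := (x.2 (N + k)).symm
    have hUk : U k x = bond g N k (f (N + k) (x.1 (N + k + 1))) := by
      simp only [hU, ContinuousMap.coe_mk]
      rw [hx]
    have hUk1 : U (k + 1) x = bond g N k (g (N + k) (x.1 (N + k + 1))) := rfl
    rcases k with _ | j
    · rw [hUk, hUk1]
      exact (hclose N (x.1 (N + 0 + 1))).le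
    · rw [hUk, hUk1]
      exact (hb N j _ _ (hclose (N + (j + 1)) (x.1 (N + (j + 1) + 1)))).le
  have hcauchy : CauchySeq U := cauchySeq_of_dist_le_of_summable c hdist hcsum
  obtain ⟨F, hF⟩ := cauchySeq_tendsto_of_complete hcauchy
  refine ⟨F, F.continuous, ?_⟩
  have := ContinuousMap.tendsto_iff_tendstoUniformly.mp hF
  exact this
end
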